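/- The Θ-unification procedure terminates: given a finite set U of unification equations over terms built from a finite set of variables, the inference rules Decomposition, Orient-1, Orient-2, Transitive, Reflexive, Clash, and Store (which never introduce fresh variables and only produce equations between subterms of the original terms) admit no infinite derivation when Transitive is applied only to pairs of equations not previously combined. -/

import Mathlib

/-- First-order terms over function symbols `F`, built from indexed variables
`X_i` where `X : V` is a variable symbol and `i : ℕ` an index. -/
inductive Term (F V : Type) : Type where
  | var : V → ℕ → Term F V
  | app : F → List (Term F V) → Term F V

namespace Term
variable {F V : Type}

/-- Index shift `↑d`: `↑d(X_j) = X_{j+d}`, commuting with function symbols. -/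
def shift (d : ℕ) : Term F V → Term F V
  | var x j => var x (j + d)
  | app f ts => app f (ts.attach.map (fun ⟨t, _⟩ => shift d t))
decreasing_by have := List.sizeOf_lt_of_mem ‹_›; simp only [Term.app.sizeOf_spec]; omega

/-- Depth of a term: variables have depth 1. -/
def depth : Term F V → ℕ
  | var _ _ => 1
  | app _ ts => 1 + (ts.attach.map (fun ⟨t, _⟩ => depth t)).foldr max 0
decreasing_by have := List.sizeOf_lt_of_mem ‹_›; simp only [Term.app.sizeOf_spec]; omega

/-- Applying a substitution (a mapping from variables to terms) to a term. -/
def subst (σ : V → ℕ → Term F V) : Term F V → Term F V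
  | var x i => σ x i
  | app f ts => app f (ts.attach.map (fun ⟨t, _⟩ => subst σ t))
decreasing_by have := List.sizeOf_lt_of_mem ‹_›; simp only [Term.app.sizeOf_spec]; omega

/-- The set of variable symbols occurring in a term. -/
def cls : Term F V → Set V
  | var x _ => {x}
  | app _ ts => (ts.attach.map (fun ⟨t, _⟩ => cls t)).foldr (· ∪ ·) ∅
decreasing_by have := List.sizeOf_lt_of_mem ‹_›; simp only [Term.app.sizeOf_spec]; omega

/-- The set of variable indices occurring in a term. -/
def idx : Term F V → Set ℕ
  | var _ i => {i}
  | app _ ts => (ts.attach.map (fun ⟨t, _⟩ => idx t)).foldr (· ∪ ·) ∅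
decreasing_by have := List.sizeOf_lt_of_mem ‹_›; simp only [Term.app.sizeOf_spec]; omega

/-- The set of variables (symbol/index pairs) occurring in a term. -/
def varsOf : Term F V → Set (V × ℕ)
  | var x i => {(x, i)}
  | app _ ts => (ts.attach.map (fun ⟨t, _⟩ => varsOf t)).foldr (· ∪ ·) ∅
decreasing_by have := List.sizeOf_lt_of_mem ‹_›; simp only [Term.app.sizeOf_spec]; omega

/-- `Pos t p` : `p` is a position of the term `t` (strings of positive integers;
`i.p` is a position of `f(t₁,…,tₙ)` whenever `p` is a position of `tᵢ`). -/
inductive Pos : Term F V → List ℕ → Prop where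
  | nil (t : Term F V) : Pos t []
  | cons {f : F} {ts : List (Term F V)} {t : Term F V} {i : ℕ} {p : List ℕ} :
      ts[i]? = some t → Pos t p → Pos (app f ts) ((i + 1) :: p)

/-- The subterm of `t` at position `p`, if `p` is a position of `t`. -/
def subtermAt : Term F V → List ℕ → Option (Term F V)
  | t, [] => some t
  | app _ ts, (Nat.succ i) :: p =>
      match h : ts[i]? with
      | some s => subtermAt s p
      | none => none
  | var _ _, _ :: _ => none
  | app _ _, 0 :: _ => none
decreasing_by have := List.sizeOf_lt_of_mem (List.mem_of_getElem? h); simp only [Term.app.sizeOf_spec]; omega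

/-- The (reflexive) subterm relation. -/
inductive Subterm : Term F V → Term F V → Prop where
  | refl (t : Term F V) : Subterm t t
  | app {s t : Term F V} {f : F} {ts : List (Term F V)} :
      s ∈ ts → Subterm t s → Subterm t (app f ts)

end Term

/-- A substitution schema `Θ`: a finite set `dom` of variable symbols together with a
base term for each symbol; `Θ` maps `X_j ↦ ↑j(base X)` for `X ∈ dom` and fixes all
other variables. -/
structure Schema (F V : Type) where
  dom : Finset V
  base : V → Term F V

namespace Schema
variable {F V : Type}

open Classical in
/-- The substitution determined by a substitution schema. -/
noncomputable def toSubst (Θ : Schema F V) : V → ℕ → Term F V :=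
  fun x j => if x ∈ Θ.dom then (Θ.base x).shift j else Term.var x j

/-- The `i`-th `Θ`-instance of a term `t`: `Θ^t(0) = t`, `Θ^t(i+1) = Θ^t(i)` with
the schema substitution applied once more. -/
noncomputable def iter (Θ : Schema F V) (t : Term F V) : ℕ → Term F V
  | 0 => t
  | i + 1 => (Θ.iter t i).subst Θ.toSubst

/-- `R_Θ(X)`: the set of indices `i` such that `X_i` occurs in the base term of `X`. -/
def R (Θ : Schema F V) (X : V) : Set ℕ := { i | (X, i) ∈ (Θ.base X).varsOf }

/-- `Θ` is simple if each base term contains at most one variable symbol from `dom Θ`. -/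
def IsSimple (Θ : Schema F V) : Prop :=
  ∀ X ∈ Θ.dom, ((Θ.base X).cls ∩ ↑Θ.dom).Subsingleton

/-- `Θ` is uniform if it is simple and `|R_Θ(X)| ≤ 1` for each `X ∈ dom Θ`. -/
def IsUniform (Θ : Schema F V) : Prop :=
  Θ.IsSimple ∧ ∀ X ∈ Θ.dom, (Θ.R X).Subsingleton

/-- `Θ` is primitive if it is uniform and `R_Θ(X) ⊆ {0,1}` for each `X ∈ dom Θ`. -/
def IsPrimitive (Θ : Schema F V) : Prop :=
  Θ.IsUniform ∧ ∀ X ∈ Θ.dom, Θ.R X ⊆ ({0, 1} : Set ℕ)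

end Schema

/-- Unification equations `s ≟ t`. -/
abbrev Eqn (F V : Type) := Term F V × Term F V

noncomputable local instance {F V : Type} : DecidableEq (Eqn F V) := Classical.decEq _
noncomputable local instance {F V : Type} : DecidableEq (Eqn F V × Eqn F V) := Classical.decEq _

/-- A configuration of the `Θ`-unification procedure: either `⊥` (`none`), or a
store `S`, an active set `U`, and a history `H` of pairs already combined by
Transitive (so that Transitive is applied only to pairs not previously combined). -/
abbrev Config (F V : Type) :=
  Option (Finset (Eqn F V) × Finset (Eqn F V) × Finset (Eqn F V × Eqn F V))

/-- The inference rules of `Θ`-unification: Decomposition, Orient-1, Orient-2,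
Transitive (restricted to pairs not previously combined), Reflexive, Clash, and Store.
No rule introduces fresh variables, and all produced equations are between
subterms of the original terms. -/
inductive Step {F V : Type} : Config F V → Config F V → Prop where
  | decomp {S U H} {f : F} {rs ss : List (Term F V)}
      (h : (Term.app f rs, Term.app f ss) ∈ U) (hlen : rs.length = ss.length) :
      Step (some (S, U, H))
        (some (S, (U.erase (Term.app f rs, Term.app f ss)) ∪ (rs.zip ss).toFinset, H))
  | orient1 {S U H} {x : V} {i : ℕ} {r : Term F V}
      (h : (r, Term.var x i) ∈ U) (hr : ∀ y j, r ≠ Term.var y j) :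
      Step (some (S, U, H))
        (some (S, insert (Term.var x i, r) (U.erase (r, Term.var x i)), H))
  | orient2 {S U H} {x y : V} {i j : ℕ}
      (h : ((Term.var y j : Term F V), Term.var x i) ∈ U)
      (h2 : ((Term.var x i : Term F V), Term.var y j) ∉ U) :
      Step (some (S, U, H)) (some (S, insert (Term.var x i, Term.var y j) U, H))
  | trans {S U H} {x : V} {i : ℕ} {r s : Term F V}
      (h1 : (Term.var x i, r) ∈ U) (h2 : (Term.var x i, s) ∈ U) (hne : r ≠ s)
      (hh : ((Term.var x i, r), (Term.var x i, s)) ∉ H) :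
      Step (some (S, U, H))
        (some (S, insert (r, s) U, insert ((Term.var x i, r), (Term.var x i, s)) H))
  | refl {S U H} {t : Term F V} (h : (t, t) ∈ U) :
      Step (some (S, U, H)) (some (S, U.erase (t, t), H))
  | clash {S U H} {f g : F} {rs ss : List (Term F V)}
      (h : (Term.app f rs, Term.app g ss) ∈ U) (hfg : f ≠ g) :
      Step (some (S, U, H)) none
  | store {S U H} {x : V} {i : ℕ} {r : Term F V}
      (h : (Term.var x i, r) ∈ U) (hs : (Term.var x i, r) ∉ S) :
      Step (some (S, U, H)) (some (insert (Term.var x i, r) S, U.erase (Term.var x i, r), H))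

/-!
Every rule keeps the active equations between subterms of the initial ones, so all equations
that ever occur lie in a finite universe `P = E × E`. Transitive adds a new pair from `P × P` to
the history and Store a new equation of `P` to the store; the remaining rules fix both and decrease,
lexicographically, the weight of the active set (Decomposition, Orient-1), the number of
variable equations `x ≟ y` whose mirror `y ≟ x` is not yet active (Orient-2), and its size
(Reflexive). Clash leads to `⊥`, which has no successor.
-/

theorem Finset.sum_union_le_add {α M : Type*} [DecidableEq α] [AddCommMonoid M] [PartialOrder M]
    [CanonicallyOrderedAdd M] (s t : Finset α) (f : α → M) :
    ∑ x ∈ s ∪ t, f x ≤ ∑ x ∈ s, f x + ∑ x ∈ t, f x := by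
  rw [← Finset.sum_union_inter]
  exact le_self_add

theorem Finset.sum_insert_le_add {α M : Type*} [DecidableEq α] [AddCommMonoid M] [PartialOrder M]
    [CanonicallyOrderedAdd M] (a : α) (s : Finset α) (f : α → M) :
    ∑ x ∈ insert a s, f x ≤ f a + ∑ x ∈ s, f x := by
  rw [Finset.insert_eq, ← Finset.sum_singleton f a]
  exact Finset.sum_union_le_add {a} s f

theorem List.sum_toFinset_le_sum_map {α : Type*} [DecidableEq α] (l : List α) (f : α → ℕ) :
    ∑ x ∈ l.toFinset, f x ≤ (l.map f).sum := by
  rw [Finset.sum_list_map_count]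
  exact Finset.sum_le_sum fun x hx =>
    Nat.le_mul_of_pos_left _ (List.count_pos_iff.2 (List.mem_toFinset.1 hx))

theorem Finset.card_sdiff_insert_lt {α : Type*} [DecidableEq α] {s t : Finset α} {a : α}
    (hs : a ∈ s) (ht : a ∉ t) : (s \ insert a t).card < (s \ t).card := by
  rw [Finset.sdiff_insert]
  exact Finset.card_erase_lt_of_mem (Finset.mem_sdiff.2 ⟨hs, ht⟩)

namespace Term

variable {F V : Type}

theorem Subterm.trans {a b c : Term F V} (hab : Subterm a b) (hbc : Subterm b c) :
    Subterm a c := by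
  induction hbc with
  | refl => exact hab
  | app hs _ ih => exact .app hs (ih hab)

theorem Subterm.of_mem_args {f : F} {ts : List (Term F V)} {t s : Term F V} (ht : t ∈ ts)
    (h : Subterm (Term.app f ts) s) : Subterm t s :=
  (Subterm.app ht (.refl t)).trans h

theorem finite_setOf_subterm : ∀ s : Term F V, {t | Subterm t s}.Finite
  | var x i => by
    refine (Set.finite_singleton (var x i)).subset fun t ht => ?_
    cases ht
    rfl
  | app f ts => by
    refine ((ts.finite_toSet.biUnion' fun u _ => finite_setOf_subterm u).insert
      (app f ts)).subset fun t ht => ?_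
    cases ht with
    | refl => exact Set.mem_insert _ _
    | app hu ht => exact Set.mem_insert_of_mem _ (Set.mem_biUnion hu ht)
decreasing_by have := List.sizeOf_lt_of_mem ‹_›; simp only [Term.app.sizeOf_spec]; omega

def appCount : Term F V → ℕ
  | var _ _ => 0
  | app _ ts => 1 + (ts.map appCount).sum

theorem appCount_app (f : F) (ts : List (Term F V)) :
    (app f ts).appCount = 1 + (ts.map appCount).sum := by
  simp [appCount]

theorem appCount_var (x : V) (i : ℕ) : (var x i : Term F V).appCount = 0 := by
  simp [appCount]

theorem appCount_pos {t : Term F V} (ht : ∀ x i, t ≠ var x i) : 0 < t.appCount := by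
  cases t with
  | var x i => exact absurd rfl (ht x i)
  | app f ts => simp [appCount_app]

end Term

namespace Eqn

variable {F V : Type}

/-- Asymmetric so that Orient-1, which moves a non-variable side to the right, lowers it. -/
def weight (e : Eqn F V) : ℕ := 2 * e.1.appCount + e.2.appCount

theorem sum_map_weight_zip_lt (f : F) (rs ss : List (Term F V)) :
    ((rs.zip ss).map weight).sum < weight (Term.app f rs, Term.app f ss) := by
  suffices h : ((rs.zip ss).map weight).sum
      ≤ 2 * (rs.map Term.appCount).sum + (ss.map Term.appCount).sum by
    simp only [weight, Term.appCount_app]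
    omega
  induction rs generalizing ss with
  | nil => simp
  | cons r rs ih =>
    cases ss with
    | nil => simp
    | cons s ss =>
      simp only [List.zip_cons_cons, List.map_cons, List.sum_cons, weight]
      have := ih ss
      omega

end Eqn

namespace Unification

variable {F V : Type}

open Eqn

noncomputable def unpairedVarEqns (U : Finset (Eqn F V)) : Finset (Eqn F V) :=
  U.filter fun e => e.1.appCount = 0 ∧ e.2.appCount = 0 ∧ e.swap ∉ U

noncomputable def activeRank (U : Finset (Eqn F V)) : ℕ ×ₗ ℕ ×ₗ ℕ :=
  toLex (∑ e ∈ U, weight e, toLex ((unpairedVarEqns U).card, U.card))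

theorem activeRank_lt_of_sum_weight_lt {U U' : Finset (Eqn F V)}
    (h : ∑ e ∈ U', weight e < ∑ e ∈ U, weight e) : activeRank U' < activeRank U :=
  Prod.Lex.toLex_lt_toLex.2 (Or.inl h)

theorem activeRank_decomp_lt {U : Finset (Eqn F V)} {f : F} {rs ss : List (Term F V)}
    (h : (Term.app f rs, Term.app f ss) ∈ U) :
    activeRank (U.erase (Term.app f rs, Term.app f ss) ∪ (rs.zip ss).toFinset)
      < activeRank U := by
  apply activeRank_lt_of_sum_weight_lt
  set p : Eqn F V := (Term.app f rs, Term.app f ss)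
  calc _ ≤ ∑ e ∈ U.erase p, weight e + ∑ e ∈ (rs.zip ss).toFinset, weight e :=
        Finset.sum_union_le_add _ _ _
    _ ≤ ∑ e ∈ U.erase p, weight e + ((rs.zip ss).map weight).sum :=
        Nat.add_le_add_left (List.sum_toFinset_le_sum_map _ _) _
    _ < ∑ e ∈ U.erase p, weight e + weight p :=
        Nat.add_lt_add_left (sum_map_weight_zip_lt f rs ss) _
    _ = _ := Finset.sum_erase_add U weight h

theorem activeRank_orient1_lt {U : Finset (Eqn F V)} {x : V} {i : ℕ} {r : Term F V}
    (h : (r, Term.var x i) ∈ U) (hr : ∀ y j, r ≠ Term.var y j) :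
    activeRank (insert (Term.var x i, r) (U.erase (r, Term.var x i))) < activeRank U := by
  apply activeRank_lt_of_sum_weight_lt
  have hlt : weight ((Term.var x i : Term F V), r) < weight (r, Term.var x i) := by
    have := Term.appCount_pos hr
    simp only [weight, Term.appCount_var]
    omega
  calc _ ≤ weight (Term.var x i, r) + ∑ e ∈ U.erase (r, Term.var x i), weight e :=
        Finset.sum_insert_le_add _ _ _
    _ < weight (r, Term.var x i) + ∑ e ∈ U.erase (r, Term.var x i), weight e :=
        Nat.add_lt_add_right hlt _
    _ = _ := Finset.add_sum_erase U weight h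

theorem activeRank_orient2_lt {U : Finset (Eqn F V)} {x y : V} {i j : ℕ}
    (h : ((Term.var y j : Term F V), Term.var x i) ∈ U)
    (h2 : ((Term.var x i : Term F V), Term.var y j) ∉ U) :
    activeRank (insert (Term.var x i, Term.var y j) U) < activeRank U := by
  set p : Eqn F V := (Term.var x i, Term.var y j)
  have hweight : ∑ e ∈ insert p U, weight e = ∑ e ∈ U, weight e := by
    simp [p, Finset.sum_insert h2, weight, Term.appCount_var]
  have hsub : unpairedVarEqns (insert p U) ⊂ unpairedVarEqns U := by
    refine (Finset.ssubset_iff_of_subset fun e he => ?_).2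
      ⟨(Term.var y j, Term.var x i), ?_, ?_⟩
    · simp only [unpairedVarEqns, Finset.mem_filter, Finset.mem_insert, not_or] at he ⊢
      obtain ⟨rfl | he, hx, hy, -, hswap⟩ := he
      · exact absurd h hswap
      · exact ⟨he, hx, hy, hswap⟩
    · simp [unpairedVarEqns, p, h, h2, Term.appCount_var]
    · simp [unpairedVarEqns, p]
  exact Prod.Lex.toLex_lt_toLex.2 (Or.inr ⟨hweight, Prod.Lex.toLex_lt_toLex.2
    (Or.inl (Finset.card_lt_card hsub))⟩)

theorem activeRank_refl_lt {U : Finset (Eqn F V)} {t : Term F V} (h : (t, t) ∈ U) :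
    activeRank (U.erase (t, t)) < activeRank U := by
  have hsub : unpairedVarEqns (U.erase (t, t)) ⊆ unpairedVarEqns U := by
    intro e he
    simp only [unpairedVarEqns, Finset.mem_filter, Finset.mem_erase] at he ⊢
    obtain ⟨⟨hne, he⟩, h1, h2, hswap⟩ := he
    refine ⟨he, h1, h2, fun hmem => hswap ⟨fun heq => hne ?_, hmem⟩⟩
    rw [← Prod.swap_swap e, heq, Prod.swap_prod_mk]
  exact Prod.Lex.toLex_lt_toLex'.2 ⟨Finset.sum_le_sum_of_subset (Finset.erase_subset _ _),
    fun _ => Prod.Lex.toLex_lt_toLex'.2 ⟨Finset.card_le_card hsub,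
      fun _ => Finset.card_erase_lt_of_mem h⟩⟩

noncomputable def rank (P : Finset (Eqn F V))
    (c : Finset (Eqn F V) × Finset (Eqn F V) × Finset (Eqn F V × Eqn F V)) :
    ℕ ×ₗ ℕ ×ₗ (ℕ ×ₗ ℕ ×ₗ ℕ) :=
  toLex ((P ×ˢ P \ c.2.2).card, toLex ((P \ c.1).card, activeRank c.2.1))

theorem rank_lt_of_activeRank_lt {P S U U' : Finset (Eqn F V)}
    {H : Finset (Eqn F V × Eqn F V)} (h : activeRank U' < activeRank U) :
    rank P (S, U', H) < rank P (S, U, H) :=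
  Prod.Lex.toLex_lt_toLex.2 (Or.inr ⟨rfl, Prod.Lex.toLex_lt_toLex.2 (Or.inr ⟨rfl, h⟩)⟩)

def SubtermClosed (E : Finset (Term F V)) : Prop :=
  ∀ f ts, Term.app f ts ∈ E → ∀ t ∈ ts, t ∈ E

theorem exists_subtermClosed_superset (U : Finset (Eqn F V)) :
    ∃ E : Finset (Term F V), SubtermClosed E ∧ U ⊆ E ×ˢ E := by
  have hfin : (⋃ e ∈ U, {t | Term.Subterm t e.1} ∪ {t | Term.Subterm t e.2}).Finite :=
    U.finite_toSet.biUnion fun e _ =>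
      (Term.finite_setOf_subterm e.1).union (Term.finite_setOf_subterm e.2)
  refine ⟨hfin.toFinset, fun f ts hmem t ht => ?_, fun e he => ?_⟩
  · simp only [Set.Finite.mem_toFinset, Set.mem_iUnion, Set.mem_union,
      Set.mem_ofPred_eq] at hmem ⊢
    obtain ⟨e, he, hsub⟩ := hmem
    exact ⟨e, he, hsub.imp (.of_mem_args ht) (.of_mem_args ht)⟩
  · simp only [Finset.mem_product, Set.Finite.mem_toFinset, Set.mem_iUnion, Set.mem_union,
      Set.mem_ofPred_eq]
    exact ⟨⟨e, he, .inl (.refl _)⟩, ⟨e, he, .inr (.refl _)⟩⟩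

end Unification

namespace Step

variable {F V : Type}

open Unification

theorem exists_eq_some_left {c c' : Config F V} (h : Step c c') : ∃ x, c = some x := by
  cases h <;> exact ⟨_, rfl⟩

theorem active_subset_prod {E : Finset (Term F V)} (hE : SubtermClosed E)
    {c c' : Finset (Eqn F V) × Finset (Eqn F V) × Finset (Eqn F V × Eqn F V)}
    (h : Step (some c) (some c')) (hU : c.2.1 ⊆ E ×ˢ E) : c'.2.1 ⊆ E ×ˢ E := by
  have mem {s t} (hst : (s, t) ∈ c.2.1) : s ∈ E ∧ t ∈ E := Finset.mem_product.1 (hU hst)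
  rcases c with ⟨S, U, H⟩
  cases h with
  | decomp h _ =>
    refine Finset.union_subset ((Finset.erase_subset _ _).trans hU) fun e he => ?_
    have hzip := List.of_mem_zip (List.mem_toFinset.1 he)
    exact Finset.mem_product.2 ⟨hE _ _ (mem h).1 _ hzip.1, hE _ _ (mem h).2 _ hzip.2⟩
  | orient1 h _ =>
    exact Finset.insert_subset (Finset.mem_product.2 (mem h).symm)
      ((Finset.erase_subset _ _).trans hU)
  | orient2 h _ => exact Finset.insert_subset (Finset.mem_product.2 (mem h).symm) hU
  | trans h1 h2 _ _ =>
    exact Finset.insert_subset (Finset.mem_product.2 ⟨(mem h1).2, (mem h2).2⟩) hU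
  | refl _ | store _ _ => exact (Finset.erase_subset _ _).trans hU

theorem rank_lt {P : Finset (Eqn F V)}
    {c c' : Finset (Eqn F V) × Finset (Eqn F V) × Finset (Eqn F V × Eqn F V)}
    (h : Step (some c) (some c')) (hU : c.2.1 ⊆ P) : rank P c' < rank P c := by
  rcases c with ⟨S, U, H⟩
  cases h with
  | decomp h _ => exact rank_lt_of_activeRank_lt (activeRank_decomp_lt h)
  | orient1 h hr => exact rank_lt_of_activeRank_lt (activeRank_orient1_lt h hr)
  | orient2 h h2 => exact rank_lt_of_activeRank_lt (activeRank_orient2_lt h h2)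
  | refl h => exact rank_lt_of_activeRank_lt (activeRank_refl_lt h)
  | trans h1 h2 _ hh =>
    exact Prod.Lex.toLex_lt_toLex.2 (Or.inl
      (Finset.card_sdiff_insert_lt (Finset.mem_product.2 ⟨hU h1, hU h2⟩) hh))
  | store h hs =>
    exact Prod.Lex.toLex_lt_toLex.2 (Or.inr ⟨rfl,
      Prod.Lex.toLex_lt_toLex.2 (Or.inl (Finset.card_sdiff_insert_lt (hU h) hs))⟩)

end Step

/-- the `Θ`-unification procedure terminates: there is no infinite
derivation from any configuration (with finite equation sets, hence finitely many
variables), when Transitive is applied only to pairs not previously combined. -/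
theorem theta_unification_terminates {F V : Type} (seq : ℕ → Config F V) :
    ¬ (∀ n, Step (seq n) (seq (n + 1))) := by
  intro hseq
  choose c hc using fun n => (hseq n).exists_eq_some_left
  have hstep (n : ℕ) : Step (some (c n)) (some (c (n + 1))) := hc n ▸ hc (n + 1) ▸ hseq n
  obtain ⟨E, hE, hU₀⟩ := Unification.exists_subtermClosed_superset (c 0).2.1
  have hU (n : ℕ) : (c n).2.1 ⊆ E ×ˢ E := by
    induction n with
    | zero => exact hU₀
    | succ n ih => exact (hstep n).active_subset_prod hE ih
  exact not_strictAnti_of_wellFoundedLT (fun n => Unification.rank (E ×ˢ E) (c n))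
    (strictAnti_nat_of_succ_lt fun n => (hstep n).rank_lt (hU n))
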